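/- Let M = Σ_g c_g g ∈ ℝG be *-invariant (i.e. M* = M, equivalently c_{g⁻¹} = c_g for all g). Then M + ‖M‖₁ is a sum of hermitian squares in ℝG, where ‖M‖₁ = Σ_g |c_g|. -/

import Mathlib

/-- The group-ring involution on `ℝG` determined by `g ↦ g⁻¹`. -/
noncomputable def gstar {G : Type*} [Group G] (x : MonoidAlgebra ℝ G) : MonoidAlgebra ℝ G :=
  MonoidAlgebra.ofCoeff (Finsupp.equivMapDomain (Equiv.inv G) x.coeff)

section GroupRingStar
variable {G : Type*} [Group G]

lemma gstar_single (g : G) (a : ℝ) :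
    gstar (MonoidAlgebra.single g a) = MonoidAlgebra.single g⁻¹ a := by
  simp [gstar, Finsupp.equivMapDomain_single]

lemma gstar_add (x y : MonoidAlgebra ℝ G) : gstar (x + y) = gstar x + gstar y :=
  congrArg MonoidAlgebra.ofCoeff (map_add (Finsupp.domCongr (M := ℝ) (Equiv.inv G)) x.coeff y.coeff)

lemma gstar_zero : gstar (0 : MonoidAlgebra ℝ G) = 0 := by ext g; simp [gstar]

lemma gstar_gstar (x : MonoidAlgebra ℝ G) : gstar (gstar x) = x := by
  ext g; simp [gstar]

lemma gstar_mul (x y : MonoidAlgebra ℝ G) : gstar (x * y) = gstar y * gstar x := by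
  induction x using MonoidAlgebra.induction_linear with
  | zero => simp [gstar_zero]
  | add f g hf hg => rw [add_mul, gstar_add, hf, hg, gstar_add, mul_add]
  | single g a =>
    induction y using MonoidAlgebra.induction_linear with
    | zero => simp [gstar_zero]
    | add f g' hf hg => rw [mul_add, gstar_add, hf, hg, gstar_add, add_mul]
    | single h b =>
      rw [MonoidAlgebra.single_mul_single, gstar_single, gstar_single, gstar_single,
        MonoidAlgebra.single_mul_single, mul_inv_rev, mul_comm]

/-- `ℝG` as a `*`-ring, with `star` induced by `g ↦ g⁻¹`. -/
noncomputable instance groupRingStar : StarRing (MonoidAlgebra ℝ G) where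
  star := gstar
  star_involutive := gstar_gstar
  star_add := gstar_add
  star_mul := gstar_mul

lemma star_of (g : G) : star (MonoidAlgebra.of ℝ G g) = MonoidAlgebra.of ℝ G g⁻¹ := by
  show gstar _ = _
  simp [MonoidAlgebra.of_apply, gstar_single]

end GroupRingStar

/-- The `ℓ¹`-norm of an element of the group ring `ℝG`. -/
noncomputable def l1Norm {G : Type*} [Group G] (x : MonoidAlgebra ℝ G) : ℝ :=
  ∑ g ∈ x.coeff.support, |x.coeff g|

/-- An element of `ℝG` is a sum of hermitian squares. -/
def IsSOS {G : Type*} [Group G] (x : MonoidAlgebra ℝ G) : Prop :=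
  ∃ (k : ℕ) (ξ : Fin k → MonoidAlgebra ℝ G), x = ∑ i, star (ξ i) * ξ i

/-! Writing `M = ∑ c_g g`, the hermitian part `(M + M*)/2` is `∑ (c_g/2)(g + g⁻¹)`, and each summand
becomes a hermitian square after adding `|c_g|`: with `σ = sign c_g`,
`(|c_g|/2) (1 + σ g)* (1 + σ g) = |c_g| + (c_g/2)(g + g⁻¹)`. Summing over the support of `M` costs
exactly `‖M‖₁`. -/

section GroupRing

variable {G : Type*} [Group G]

open MonoidAlgebra

lemma star_real_smul (r : ℝ) (x : MonoidAlgebra ℝ G) : star (r • x) = r • star x := by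
  show gstar (r • x) = r • gstar x
  ext g
  exact MonoidAlgebra.coeff_smul_apply r x g⁻¹

lemma sum_coeff_smul_of (x : MonoidAlgebra ℝ G) :
    ∑ g ∈ x.coeff.support, x.coeff g • of ℝ G g = x := by
  conv_rhs => rw [← x.sum_coeff_single]
  refine Finset.sum_congr rfl fun g _ => ?_
  rw [of_apply, smul_single', mul_one]

lemma star_eq_sum_coeff_smul_of_inv (x : MonoidAlgebra ℝ G) :
    star x = ∑ g ∈ x.coeff.support, x.coeff g • of ℝ G g⁻¹ := by
  conv_lhs => rw [← sum_coeff_smul_of x]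
  simp only [star_sum, star_real_smul, star_of]

namespace IsSOS

lemma zero : IsSOS (0 : MonoidAlgebra ℝ G) := ⟨0, Fin.elim0, by simp⟩

lemma star_mul_self (ξ : MonoidAlgebra ℝ G) : IsSOS (star ξ * ξ) := ⟨1, fun _ => ξ, by simp⟩

lemma add {x y : MonoidAlgebra ℝ G} (hx : IsSOS x) (hy : IsSOS y) : IsSOS (x + y) := by
  obtain ⟨k, ξ, rfl⟩ := hx
  obtain ⟨l, η, rfl⟩ := hy
  exact ⟨k + l, Fin.append ξ η, by simp [Fin.sum_univ_add]⟩

lemma finset_sum {ι : Type*} (s : Finset ι) {x : ι → MonoidAlgebra ℝ G}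
    (hx : ∀ i ∈ s, IsSOS (x i)) : IsSOS (∑ i ∈ s, x i) := by
  classical
  induction s using Finset.induction_on with
  | empty => simpa using zero
  | insert a s ha ih =>
    rw [Finset.sum_insert ha]
    exact add (hx a (s.mem_insert_self a)) (ih fun i hi => hx i (Finset.mem_insert_of_mem hi))

lemma smul_of_nonneg {x : MonoidAlgebra ℝ G} (hx : IsSOS x) {r : ℝ} (hr : 0 ≤ r) :
    IsSOS (r • x) := by
  obtain ⟨k, ξ, rfl⟩ := hx
  refine ⟨k, fun i => √r • ξ i, ?_⟩
  simp only [Finset.smul_sum, star_real_smul, smul_mul_smul_comm, Real.mul_self_sqrt hr]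

end IsSOS

lemma half_abs_smul_star_mul_self (c : ℝ) (g : G) :
    (|c| / 2) •
        (star (1 + (SignType.sign c : ℝ) • of ℝ G g) * (1 + (SignType.sign c : ℝ) • of ℝ G g)) =
      |c| • 1 + (c / 2) • (of ℝ G g + of ℝ G g⁻¹) := by
  set σ : ℝ := (SignType.sign c : ℝ)
  have hσ : |c| * σ = c := abs_mul_sign c
  have hσσ : |c| * (σ * σ) = |c| := by rw [← mul_assoc, hσ, mul_comm, sign_mul_self]
  have hinv : of ℝ G g⁻¹ * of ℝ G g = 1 := by rw [← map_mul, inv_mul_cancel, map_one]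
  rw [star_add, star_one, star_real_smul, star_of, add_mul, mul_add, mul_add, smul_mul_smul_comm,
    hinv]
  simp only [one_mul, mul_one]
  calc (|c| / 2) • (1 + σ • of ℝ G g + (σ • of ℝ G g⁻¹ + (σ * σ) • (1 : MonoidAlgebra ℝ G)))
      = ((|c| + |c| * (σ * σ)) / 2) • 1 + ((|c| * σ) / 2) • (of ℝ G g + of ℝ G g⁻¹) := by module
    _ = |c| • 1 + (c / 2) • (of ℝ G g + of ℝ G g⁻¹) := by rw [hσσ, hσ, add_self_div_two]

lemma isSOS_abs_smul_one_add_half_smul (c : ℝ) (g : G) :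
    IsSOS (|c| • 1 + (c / 2) • (of ℝ G g + of ℝ G g⁻¹)) := by
  rw [← half_abs_smul_star_mul_self]
  exact (IsSOS.star_mul_self _).smul_of_nonneg (by positivity)

lemma isSOS_half_smul_add_star_add_l1Norm_smul_one (x : MonoidAlgebra ℝ G) :
    IsSOS ((1 / 2 : ℝ) • (x + star x) + l1Norm x • 1) := by
  have hsum : (1 / 2 : ℝ) • (x + star x) + l1Norm x • 1
      = ∑ g ∈ x.coeff.support, (|x.coeff g| • 1 + (x.coeff g / 2) • (of ℝ G g + of ℝ G g⁻¹)) := by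
    rw [star_eq_sum_coeff_smul_of_inv, l1Norm]
    nth_rw 1 [← sum_coeff_smul_of x]
    simp only [Finset.sum_add_distrib, Finset.smul_sum, Finset.sum_smul, smul_add,
      smul_smul, one_div, inv_mul_eq_div]
    abel
  rw [hsum]
  exact IsSOS.finset_sum _ fun g _ => isSOS_abs_smul_one_add_half_smul _ _

end GroupRing

/-- if `M ∈ ℝG` is `*`-invariant then `M + ‖M‖₁` is a sum of hermitian
squares. -/
theorem statement2 {G : Type*} [Group G] (M : MonoidAlgebra ℝ G) (hM : star M = M) :
    IsSOS (M + l1Norm M • (1 : MonoidAlgebra ℝ G)) := by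
  have h := isSOS_half_smul_add_star_add_l1Norm_smul_one M
  rwa [hM, ← two_smul ℝ M, smul_smul, one_div_mul_cancel two_ne_zero, one_smul] at h
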